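/- Let M₁, M₂ ∈ M₂(ℝ) be linearly independent symmetric matrices. If γ̃ and γ̃' are both symmetric positive-definite 2×2 real matrices with determinant 1 satisfying ⟨γ̃, M₁⟩ = ⟨γ̃, M₂⟩ = 0 and ⟨γ̃', M₁⟩ = ⟨γ̃', M₂⟩ = 0, then γ̃ = γ̃'. -/

import Mathlib

/-!
A symmetric 2×2 matrix is determined by the three coordinates `(A₀₀, A₀₁, A₁₁)`, and in these
coordinates `⟨A, M⟩` is a dot product with `(M₀₀, M₀₁ + M₁₀, M₁₁)`. Two vectors of `ℝ³` orthogonal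
to the same independent pair are both multiples of its cross product, so `γ̃' = a • γ̃`. Comparing
determinants gives `a² = 1`, and positive definiteness of both forces `a = 1`.
-/

open Matrix

/-- The Frobenius inner product `⟨A,B⟩ = tr(AᵀB)`. -/
noncomputable def frob (A B : Matrix (Fin 2) (Fin 2) ℝ) : ℝ := (Aᵀ * B).trace

section CrossProduct

variable {F : Type*} [Field F] {m₁ m₂ x y : Fin 3 → F}

theorem exists_smul_crossProduct_eq_of_dotProduct_eq_zero (hm : LinearIndependent F ![m₁, m₂])
    (h₁ : x ⬝ᵥ m₁ = 0) (h₂ : x ⬝ᵥ m₂ = 0) : ∃ t : F, t • m₁ ⨯₃ m₂ = x := by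
  have hn : m₁ ⨯₃ m₂ ≠ 0 := crossProduct_ne_zero_iff_linearIndependent.mpr hm
  have hnx : m₁ ⨯₃ m₂ ⨯₃ x = 0 := by
    rw [cross_cross_eq_smul_sub_smul, dotProduct_comm m₁, dotProduct_comm m₂, h₁, h₂]
    simp
  have hdep : ¬ LinearIndependent F ![m₁ ⨯₃ m₂, x] :=
    fun h ↦ crossProduct_ne_zero_iff_linearIndependent.mpr h hnx
  simpa [LinearIndependent.pair_iff' hn] using hdep

theorem exists_smul_eq_of_dotProduct_eq_zero (hm : LinearIndependent F ![m₁, m₂])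
    (hx₁ : x ⬝ᵥ m₁ = 0) (hx₂ : x ⬝ᵥ m₂ = 0) (hy₁ : y ⬝ᵥ m₁ = 0) (hy₂ : y ⬝ᵥ m₂ = 0)
    (hx : x ≠ 0) : ∃ a : F, a • x = y := by
  obtain ⟨t, rfl⟩ := exists_smul_crossProduct_eq_of_dotProduct_eq_zero hm hx₁ hx₂
  obtain ⟨s, rfl⟩ := exists_smul_crossProduct_eq_of_dotProduct_eq_zero hm hy₁ hy₂
  have ht : t ≠ 0 := by rintro rfl; simp at hx
  exact ⟨s / t, by rw [smul_smul, div_mul_cancel₀ s ht]⟩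

end CrossProduct

namespace Matrix.PosDef

variable {n : Type*} {A : Matrix n n ℝ} {a : ℝ}

theorem pos_of_smul [Nonempty n] (hA : A.PosDef) (haA : (a • A).PosDef) : 0 < a := by
  let i : n := Classical.arbitrary n
  have h : 0 < a * A i i := haA.diag_pos
  exact pos_of_mul_pos_left h hA.diag_pos.le

theorem smul_eq_self_of_det_eq [Fintype n] [Nonempty n] [DecidableEq n] (hA : A.PosDef)
    (haA : (a • A).PosDef) (hdet : (a • A).det = A.det) : a • A = A := by
  have ha : 0 < a := hA.pos_of_smul haA
  have hpow : a ^ Fintype.card n = 1 := by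
    rw [det_smul] at hdet
    exact (mul_eq_right₀ hA.det_pos.ne').mp hdet
  rw [(pow_eq_one_iff_of_nonneg ha.le Fintype.card_ne_zero).mp hpow, one_smul]

end Matrix.PosDef

section SymmetricCoordinates

variable {R : Type*}

def symCoords (A : Matrix (Fin 2) (Fin 2) R) : Fin 3 → R := ![A 0 0, A 0 1, A 1 1]

def frobCoords [Add R] (M : Matrix (Fin 2) (Fin 2) R) : Fin 3 → R := ![M 0 0, M 0 1 + M 1 0, M 1 1]

@[simp]
theorem symCoords_zero [Zero R] : symCoords (0 : Matrix (Fin 2) (Fin 2) R) = 0 := by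
  ext i; fin_cases i <;> rfl

theorem symCoords_smul [Mul R] (c : R) (A : Matrix (Fin 2) (Fin 2) R) :
    symCoords (c • A) = c • symCoords A := by
  ext i; fin_cases i <;> rfl

theorem eq_of_symCoords_eq {A B : Matrix (Fin 2) (Fin 2) R} (hA : A.IsSymm) (hB : B.IsSymm)
    (h : symCoords A = symCoords B) : A = B := by
  have h₀₀ := congrFun h 0
  have h₀₁ := congrFun h 1
  have h₁₁ := congrFun h 2
  simp only [symCoords] at h₀₀ h₀₁ h₁₁
  ext i j
  fin_cases i <;> fin_cases j
  · exact h₀₀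
  · exact h₀₁
  · simpa [hA.apply 0 1, hB.apply 0 1] using h₀₁
  · exact h₁₁

theorem frob_eq_symCoords_dotProduct_frobCoords {A : Matrix (Fin 2) (Fin 2) ℝ} (hA : A.IsSymm)
    (M : Matrix (Fin 2) (Fin 2) ℝ) : frob A M = symCoords A ⬝ᵥ frobCoords M := by
  simp only [frob, symCoords, frobCoords, trace_fin_two, mul_apply, Fin.sum_univ_two,
    transpose_apply, vec3_dotProduct, Matrix.cons_val, hA.apply 0 1]
  ring

theorem linearIndependent_frobCoords {M₁ M₂ : Matrix (Fin 2) (Fin 2) ℝ} (h₁ : M₁.IsSymm)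
    (h₂ : M₂.IsSymm) (hindep : LinearIndependent ℝ ![M₁, M₂]) :
    LinearIndependent ℝ ![frobCoords M₁, frobCoords M₂] := by
  rw [LinearIndependent.pair_iff] at hindep ⊢
  intro a b hab
  have h₀₀ := congrFun hab 0
  have h₀₁ := congrFun hab 1
  have h₁₁ := congrFun hab 2
  simp only [frobCoords, Pi.add_apply, Pi.smul_apply, smul_eq_mul, Matrix.cons_val,
    Pi.zero_apply, h₁.apply 0 1, h₂.apply 0 1] at h₀₀ h₀₁ h₁₁
  apply hindep
  ext i j
  fin_cases i <;> fin_cases j <;> simp [h₁.apply 0 1, h₂.apply 0 1] <;> linarith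

end SymmetricCoordinates

theorem stmt10 (M₁ M₂ : Matrix (Fin 2) (Fin 2) ℝ)
    (h₁ : M₁.IsSymm) (h₂ : M₂.IsSymm)
    (hindep : LinearIndependent ℝ ![M₁, M₂])
    (γt γt' : Matrix (Fin 2) (Fin 2) ℝ)
    (hγpd : γt.PosDef) (hγdet : γt.det = 1)
    (hγ'pd : γt'.PosDef) (hγ'det : γt'.det = 1)
    (horth₁ : frob γt M₁ = 0) (horth₂ : frob γt M₂ = 0)
    (horth₁' : frob γt' M₁ = 0) (horth₂' : frob γt' M₂ = 0) :
    γt = γt' := by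
  have hsymm : γt.IsSymm := hγpd.isHermitian
  have hsymm' : γt'.IsSymm := hγ'pd.isHermitian
  simp only [frob_eq_symCoords_dotProduct_frobCoords hsymm,
    frob_eq_symCoords_dotProduct_frobCoords hsymm'] at horth₁ horth₂ horth₁' horth₂'
  have hne : symCoords γt ≠ 0 := fun h ↦ by
    have : γt = 0 := eq_of_symCoords_eq hsymm isSymm_zero (by rw [h, symCoords_zero])
    simp [this] at hγdet
  obtain ⟨a, ha⟩ := exists_smul_eq_of_dotProduct_eq_zero
    (linearIndependent_frobCoords h₁ h₂ hindep) horth₁ horth₂ horth₁' horth₂' hne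
  have hγ' : a • γt = γt' := eq_of_symCoords_eq (hsymm.smul a) hsymm' (by rw [symCoords_smul, ha])
  subst hγ'
  exact (hγpd.smul_eq_self_of_det_eq hγ'pd (by rw [hγdet, hγ'det])).symm
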